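/- arXiv:2005.04759 — 3 statements merged into one kernel-verified Lean document; each statement's English description precedes it below -/
import Mathlib

section
/- If c = (c_1,...,c_n) is a parking sequence for (y; z), then the order statistics c_{(1)} ≤ ... ≤ c_{(n)} of c satisfy c_{(1)} ≤ z and, for each 2 ≤ j ≤ n, c_{(j)} ≤ z + y_{(n)} + y_{(n-1)} + ... + y_{(n-j+2)} (i.e., z plus the sum of the j-1 largest car lengths). -/
open Finset

/-- The first empty spot `j` with `c ≤ j ≤ M` (street spots are `1..M`). -/
def firstEmpty (occ : Finset ℕ) (M c : ℕ) : Option ℕ :=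
  (List.range' c (M + 1 - c)).find? (fun j => decide (j ∉ occ))

/-- Park cars with preferences `cs` and lengths `ys` on a street with spots `1..M`,
where `occ` is the set of already-occupied spots.  Returns the list of starting
spots of the cars (in order of entry) if all cars can park. -/
def parkAux (M : ℕ) : Finset ℕ → List ℕ → List ℕ → Option (List ℕ)
  | _, [], [] => some []
  | occ, c :: cs, y :: ys =>
    match firstEmpty occ M c with
    | none => none
    | some j =>
      if (∀ i ∈ Finset.Ico j (j + y), i ∉ occ) ∧ j + y - 1 ≤ M then
        (parkAux M (occ ∪ Finset.Ico j (j + y)) cs ys).map (j :: ·)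
      else none
  | _, _, _ => none

/-- Outcome of the parking process for length vector `ys`, preference sequence `cs`,
and trailer parameter `z` (the trailer occupies spots `1,…,z-1`); the street has
`z - 1 + ys.sum` spots. -/
def parkResult (ys cs : List ℕ) (z : ℕ) : Option (List ℕ) :=
  parkAux (z - 1 + ys.sum) (Finset.Ico 1 z) cs ys

/-- `cs` is a parking sequence for `(ys; z)`. -/
def IsParkingSeq (ys cs : List ℕ) (z : ℕ) : Prop :=
  cs.length = ys.length ∧ (∀ c ∈ cs, 1 ≤ c) ∧ (parkResult ys cs z).isSome = true

/-- Starting spots of the standard (no-gap, in order) final configuration. -/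
def standardStarts (z : ℕ) : List ℕ → List ℕ
  | [] => []
  | y :: ys => z :: standardStarts (z + y) ys

/-- `cs` parks `ys` in the standard order `T, C₁, …, Cₙ`. -/
def ParksStandard (ys cs : List ℕ) (z : ℕ) : Prop :=
  parkResult ys cs z = some (standardStarts z ys)

/-- `cs` is a permutation-invariant parking sequence for `(ys; z)`. -/
def PermInvariant (ys cs : List ℕ) (z : ℕ) : Prop :=
  ∀ cs' : List ℕ, cs'.Perm cs → IsParkingSeq ys cs' z

/-- `cs` is a strong parking sequence for `{ys; z}`. -/
def StrongParkingSeq (ys cs : List ℕ) (z : ℕ) : Prop :=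
  ∀ ys' : List ℕ, ys'.Perm ys → IsParkingSeq ys' cs z

/-- The nondecreasing rearrangement (order statistics) of a list. -/
def orderStats (l : List ℕ) : List ℕ :=
  Multiset.sort (l : Multiset ℕ) (· ≤ ·)

/-- `xs` is a `u`-parking function. -/
def IsUPF (u xs : List ℕ) : Prop :=
  xs.length = u.length ∧ (∀ x ∈ xs, 1 ≤ x) ∧
    ∀ i < u.length, (orderStats xs).getD i 0 ≤ u.getD i 0

/-!
After a successful run the trailer and the cars fill every spot of the street `1, …, M`,
`M = z - 1 + ∑ yᵢ`, and no car occupies a spot before its preference. Hence for `K ≤ M` the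
first `K` spots are covered by the trailer and the cars preferring a spot `≤ K`:
`K ≤ z - 1 + ∑_{cᵢ ≤ K} yᵢ`. If `c₍ⱼ₎ > K`, at most `j - 1` cars prefer a spot `≤ K`, so that sum
is at most the sum `S` of the `j - 1` largest lengths, and `K = z + S` is contradictory.
The case `z + S > M` cannot occur, since a car preferring a spot beyond `M` never parks.
-/

def lengthSumPrefLE (cs ys : List ℕ) (K : ℕ) : ℕ :=
  (((cs.zip ys).filter fun p => p.1 ≤ K).map Prod.snd).sum

lemma lengthSumPrefLE_cons (c y K : ℕ) (cs ys : List ℕ) :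
    lengthSumPrefLE (c :: cs) (y :: ys) K = (if c ≤ K then y else 0) + lengthSumPrefLE cs ys K := by
  unfold lengthSumPrefLE
  split_ifs with h <;> simp [h]

section Parking

variable {M : ℕ}

lemma firstEmpty_eq_some {occ : Finset ℕ} {c j : ℕ} (h : firstEmpty occ M c = some j) :
    c ≤ j ∧ j ≤ M := by
  have := List.mem_of_find?_eq_some h
  simp only [List.mem_range'_1] at this
  omega

lemma parkAux_cons_isSome {occ : Finset ℕ} {c y : ℕ} {cs ys : List ℕ}
    (h : (parkAux M occ (c :: cs) (y :: ys)).isSome) :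
    ∃ j, c ≤ j ∧ j ≤ M ∧ j + y ≤ M + 1 ∧ Disjoint occ (Ico j (j + y)) ∧
      (parkAux M (occ ∪ Ico j (j + y)) cs ys).isSome := by
  unfold parkAux at h
  cases hj : firstEmpty occ M c with
  | none => simp [hj] at h
  | some j =>
    obtain ⟨hcj, hjM⟩ := firstEmpty_eq_some hj
    simp only [hj] at h
    split_ifs at h with hfree
    · exact ⟨j, hcj, hjM, by omega, disjoint_right.mpr hfree.1, by simpa using h⟩
    · simp at h

lemma le_of_mem_of_parkAux_isSome :
    ∀ {occ : Finset ℕ} {cs ys : List ℕ}, (parkAux M occ cs ys).isSome → ∀ c ∈ cs, c ≤ M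
  | _, [], _, _ => by simp
  | _, _ :: _, [], h => by simp [parkAux] at h
  | _, c :: cs, y :: ys, h => by
    obtain ⟨j, hcj, hjM, -, -, hrest⟩ := parkAux_cons_isSome h
    rintro c' (_ | ⟨_, hc'⟩)
    · omega
    · exact le_of_mem_of_parkAux_isSome hrest c' hc'

lemma exists_occupied_of_parkAux_isSome :
    ∀ {occ : Finset ℕ} {cs ys : List ℕ}, (parkAux M occ cs ys).isSome →
      ∃ B : Finset ℕ, Disjoint occ B ∧ #B = ys.sum ∧ (∀ x ∈ B, x ≤ M ∧ ∃ c ∈ cs, c ≤ x) ∧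
        ∀ K, #{x ∈ B | x ≤ K} ≤ lengthSumPrefLE cs ys K
  | _, [], [], _ => ⟨∅, by simp [lengthSumPrefLE]⟩
  | _, [], _ :: _, h => by simp [parkAux] at h
  | _, _ :: _, [], h => by simp [parkAux] at h
  | occ, c :: cs, y :: ys, h => by
    obtain ⟨j, hcj, -, hjy, hdisj, hrest⟩ := parkAux_cons_isSome h
    obtain ⟨B, hB, hcard, hmem, hload⟩ := exists_occupied_of_parkAux_isSome hrest
    refine ⟨Ico j (j + y) ∪ B, disjoint_union_right.mpr ⟨hdisj, hB.mono_left subset_union_left⟩,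
      ?_, ?_, fun K => ?_⟩
    · rw [card_union_of_disjoint (hB.mono_left subset_union_right), hcard, Nat.card_Ico,
        List.sum_cons]
      omega
    · intro x hx
      rcases mem_union.mp hx with hx | hx
      · rw [mem_Ico] at hx
        exact ⟨by omega, c, List.mem_cons_self, by omega⟩
      · obtain ⟨hxM, c', hc', hc'x⟩ := hmem x hx
        exact ⟨hxM, c', List.mem_cons_of_mem c hc', hc'x⟩
    · have hcar : #{x ∈ Ico j (j + y) | x ≤ K} ≤ if c ≤ K then y else 0 := by
        split_ifs with hcK
        · exact (card_filter_le _ _).trans (by simp)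
        · rw [Nat.le_zero, card_eq_zero, filter_eq_empty_iff]
          intro x hx
          rw [mem_Ico] at hx
          omega
      rw [filter_union, lengthSumPrefLE_cons]
      exact (card_union_le _ _).trans (add_le_add hcar (hload K))

end Parking

lemma le_sub_one_add_lengthSumPrefLE {ys cs : List ℕ} {z K : ℕ} (hps : IsParkingSeq ys cs z)
    (hK : K ≤ z - 1 + ys.sum) : K ≤ z - 1 + lengthSumPrefLE cs ys K := by
  obtain ⟨-, hcpos, hsome⟩ := hps
  obtain ⟨B, hdisj, hcard, hmem, hload⟩ := exists_occupied_of_parkAux_isSome hsome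
  have hfull : Ico 1 z ∪ B = Icc 1 (z - 1 + ys.sum) := by
    refine eq_of_subset_of_card_le (fun x hx => ?_) ?_
    · rw [mem_Icc]
      rcases mem_union.mp hx with hx | hx
      · rw [mem_Ico] at hx
        omega
      · obtain ⟨hxM, c, hc, hcx⟩ := hmem x hx
        exact ⟨(hcpos c hc).trans hcx, hxM⟩
    · rw [card_union_of_disjoint hdisj, hcard, Nat.card_Ico, Nat.card_Icc]
      omega
  calc K = #(Icc 1 K) := by simp
    _ ≤ #{x ∈ Ico 1 z ∪ B | x ≤ K} := by
        refine card_le_card fun x hx => ?_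
        rw [hfull]
        simp only [mem_filter, mem_Icc] at hx ⊢
        omega
    _ ≤ #(Ico 1 z) + #{x ∈ B | x ≤ K} := by
        rw [filter_union]
        exact (card_union_le _ _).trans (Nat.add_le_add_right (card_filter_le _ _) _)
    _ ≤ z - 1 + lengthSumPrefLE cs ys K := by
        rw [Nat.card_Ico]
        exact Nat.add_le_add_left (hload K) _

lemma length_orderStats (l : List ℕ) : (orderStats l).length = l.length := by
  simp [orderStats]

lemma orderStats_perm (l : List ℕ) : (orderStats l).Perm l :=
  Multiset.coe_eq_coe.mp (Multiset.sort_eq _ _)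

lemma pairwise_orderStats (l : List ℕ) : (orderStats l).Pairwise (· ≤ ·) :=
  Multiset.pairwise_sort _ _

lemma List.sum_take_le_sum_take_cons {b : ℕ} {d : List ℕ} (hb : ∀ x ∈ d, x ≤ b) :
    ∀ k, (d.take k).sum ≤ ((b :: d).take k).sum
  | 0 => by simp
  | k + 1 => by
    rw [List.take_succ_cons, List.sum_cons, List.take_add_one, List.sum_append, add_comm]
    gcongr
    cases h : d[k]? with
    | none => simp
    | some x => simpa using hb x (List.mem_of_getElem? h)

lemma List.sum_le_sum_take_of_subperm {L d : List ℕ} (hd : d.Pairwise (· ≥ ·)) (h : L.Subperm d)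
    {k : ℕ} (hk : L.length ≤ k) : L.sum ≤ (d.take k).sum := by
  induction d generalizing L k with
  | nil => simp [List.subperm_nil.mp h]
  | cons b d ih =>
    have herase : (L.erase b).Subperm d := by simpa using h.erase b
    by_cases hbL : b ∈ L
    · obtain ⟨k, rfl⟩ : ∃ k', k = k' + 1 :=
        Nat.exists_eq_add_one.mpr (hk.trans_lt' (List.length_pos_of_mem hbL))
      have := ih hd.of_cons herase (k := k) (by rw [List.length_erase_of_mem hbL]; omega)
      rw [← List.sum_erase hbL, List.take_succ_cons, List.sum_cons]
      omega
    · rw [List.erase_of_not_mem hbL] at herase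
      exact (ih hd.of_cons herase hk).trans
        (List.sum_take_le_sum_take_cons (fun x hx => List.rel_of_pairwise_cons hd hx) k)

lemma sum_le_sum_drop_orderStats {L l : List ℕ} (h : L.Subperm l) {k : ℕ} (hk : L.length ≤ k) :
    L.sum ≤ ((orderStats l).drop (l.length - k)).sum := by
  have := List.sum_le_sum_take_of_subperm (List.pairwise_reverse.mpr (pairwise_orderStats l))
    (h.trans ((List.reverse_perm _).trans (orderStats_perm l)).symm.subperm) hk
  rwa [List.take_reverse, List.sum_reverse, length_orderStats] at this

lemma countP_le_of_lt_getD {l : List ℕ} (hl : l.Pairwise (· ≤ ·)) {i K : ℕ}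
    (hK : K < l.getD i 0) : l.countP (· ≤ K) ≤ i := by
  have hi : i < l.length := by
    by_contra! h
    rw [List.getD_eq_default _ _ h] at hK
    omega
  rw [List.getD_eq_getElem _ _ hi] at hK
  have hdrop := hl.drop (i := i)
  rw [List.drop_eq_getElem_cons hi, List.pairwise_cons] at hdrop
  have hzero : (l.drop i).countP (· ≤ K) = 0 := by
    rw [List.drop_eq_getElem_cons hi]
    refine List.countP_eq_zero.mpr ?_
    rintro x (_ | ⟨_, hx⟩)
    · simpa using hK
    · simpa using hK.trans_le (hdrop.1 x hx)
  calc l.countP (· ≤ K) = (l.take i).countP (· ≤ K) + (l.drop i).countP (· ≤ K) := by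
        rw [← List.countP_append, List.take_append_drop]
    _ ≤ i := by
        rw [hzero, add_zero]
        exact List.countP_le_length.trans (List.length_take_le _ _)

lemma lengthSumPrefLE_le {cs ys : List ℕ} (hlen : cs.length = ys.length) {K k : ℕ}
    (hK : cs.countP (· ≤ K) ≤ k) :
    lengthSumPrefLE cs ys K ≤ ((orderStats ys).drop (ys.length - k)).sum := by
  refine sum_le_sum_drop_orderStats ?_ ?_
  · have := (List.filter_sublist (l := cs.zip ys) (p := fun p => decide (p.1 ≤ K))).map Prod.snd
    rw [List.map_snd_zip hlen.ge] at this
    exact this.subperm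
  · calc _ = (cs.zip ys).countP (fun p => p.1 ≤ K) := by
          rw [List.length_map, List.countP_eq_length_filter]
      _ = cs.countP (· ≤ K) := by
          conv_rhs => rw [← List.map_fst_zip hlen.le (l₂ := ys), List.countP_map]
          rfl
      _ ≤ k := hK

theorem getD_orderStats_le_of_isParkingSeq {ys cs : List ℕ} {z : ℕ} (hps : IsParkingSeq ys cs z)
    (hz : 0 < z) (i : ℕ) :
    (orderStats cs).getD i 0 ≤ z + ((orderStats ys).drop (ys.length - i)).sum := by
  set S := ((orderStats ys).drop (ys.length - i)).sum
  by_contra! hlt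
  have hcount : cs.countP (· ≤ z + S) ≤ i :=
    (orderStats_perm cs).countP_eq _ ▸ countP_le_of_lt_getD (pairwise_orderStats cs) hlt
  have hS : lengthSumPrefLE cs ys (z + S) ≤ S := lengthSumPrefLE_le hps.1 hcount
  by_cases hKM : z + S ≤ z - 1 + ys.sum
  · have := le_sub_one_add_lengthSumPrefLE hps hKM
    omega
  · have hall : cs.countP (· ≤ z + S) = cs.length := List.countP_eq_length.mpr fun c hc => by
      have := le_of_mem_of_parkAux_isSome hps.2.2 c hc
      simp only [decide_eq_true_eq]
      omega
    rw [List.getD_eq_default _ _ (by rw [length_orderStats]; omega)] at hlt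
    omega

theorem stmt1_general (n z : ℕ) (hz : 0 < z) (ys cs : List ℕ)
    (hylen : ys.length = n)
    (hps : IsParkingSeq ys cs z) :
    (orderStats cs).getD 0 0 ≤ z ∧
    ∀ j, 2 ≤ j → j ≤ n →
      (orderStats cs).getD (j - 1) 0 ≤ z + ((orderStats ys).drop (n - (j - 1))).sum := by
  subst hylen
  have hfirst := getD_orderStats_le_of_isParkingSeq hps hz 0
  rw [Nat.sub_zero, ← length_orderStats, List.drop_length, List.sum_nil, add_zero] at hfirst
  exact ⟨hfirst, fun j _ _ => getD_orderStats_le_of_isParkingSeq hps hz (j - 1)⟩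

theorem stmt1 (n z : ℕ) (hn : 0 < n) (hz : 0 < z) (ys cs : List ℕ)
    (hylen : ys.length = n) (hypos : ∀ y ∈ ys, 0 < y)
    (hps : IsParkingSeq ys cs z) :
    (orderStats cs).getD 0 0 ≤ z ∧
    ∀ j, 2 ≤ j → j ≤ n →
      (orderStats cs).getD (j - 1) 0 ≤ z + ((orderStats ys).drop (n - (j - 1))).sum :=
  stmt1_general n z hz ys cs hylen hps
end

section
/- For y = (k,k,...,k) ∈ (Z_+)^n (all cars of length k) and trailer parameter z, the number of increasing parking sequences for (y;z) equals (z/(z+n(k+1))) · binom(z+n(k+1), n). -/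
/-!
A nondecreasing sequence `c` with positive entries parks exactly when every `cᵢ` is at most
`z + y₁ + ⋯ + yᵢ₋₁`, the spot right behind the cars already parked: then car `i` takes that
spot, and otherwise the remaining cars, which all prefer spots `≥ cᵢ`, need more room than is
left there.
For equal lengths `k`, the number `R(z, n)` of such sequences satisfies
`R(z + 1, n + 1) = R(z, n + 1) + R(z + 1 + k, n)` (either `c₁ = 1`, or lower every entry by
one), and so do the Rothe numbers `z / (z + n(k+1)) · C(z + n(k+1), n)`.
-/

open Finset

lemma firstEmpty_eq_some_s3 {occ : Finset ℕ} {M c a : ℕ} (hca : c ≤ a) (haM : a ≤ M)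
    (hocc : ∀ j, c ≤ j → j < a → j ∈ occ) (ha : a ∉ occ) :
    firstEmpty occ M c = some a := by
  rw [firstEmpty, show M + 1 - c = (a - c) + ((M - a) + 1) by omega, ← List.range'_append,
    List.range'_succ, show c + 1 * (a - c) = a by omega, List.find?_append,
    List.find?_eq_none.mpr, Option.none_or, List.find?_cons_of_pos (by simpa using ha)]
  intro j hj
  rw [List.mem_range'_1] at hj
  simpa using hocc j hj.1 (by omega)

lemma parkResult_cons_of_le {y c a : ℕ} {ys cs : List ℕ} (hy : 0 < y) (hc : 1 ≤ c)
    (hca : c ≤ a) :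
    parkResult (y :: ys) (c :: cs) a = (parkResult ys cs (a + y)).map (a :: ·) := by
  have ha : 1 ≤ a := hc.trans hca
  have hfirst : firstEmpty (Ico 1 a) (a - 1 + (y :: ys).sum) c = some a :=
    firstEmpty_eq_some_s3 hca (by rw [List.sum_cons]; omega)
      (fun j hcj hja => mem_Ico.mpr ⟨by omega, hja⟩) (by simp)
  have hfree :
      (∀ i ∈ Ico a (a + y), i ∉ Ico 1 a) ∧ a + y - 1 ≤ a - 1 + (y :: ys).sum := by
    refine ⟨fun i hi => ?_, by rw [List.sum_cons]; omega⟩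
    rw [mem_Ico] at hi ⊢
    omega
  rw [parkResult, parkAux, hfirst]
  dsimp only
  rw [if_pos hfree, Ico_union_Ico_eq_Ico ha (Nat.le_add_right a y), parkResult, List.sum_cons,
    show a - 1 + (y + ys.sum) = a + y - 1 + ys.sum by omega]

lemma sum_le_card_of_parkAux_eq_some {M : ℕ} {occ : Finset ℕ} {cs ys l : List ℕ}
    (h : parkAux M occ cs ys = some l) {c₀ : ℕ} (hcs : ∀ c ∈ cs, c₀ ≤ c) :
    ys.sum ≤ #(Ico c₀ (M + 1) \ occ) := by
  induction cs generalizing ys occ l with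
  | nil =>
    cases ys with
    | nil => simp
    | cons y ys => simp [parkAux] at h
  | cons c cs ih =>
    cases ys with
    | nil => simp [parkAux] at h
    | cons y ys =>
      simp only [parkAux] at h
      split at h
      case h_1 => simp at h
      rename_i j hj
      split_ifs at h with hfit
      obtain ⟨l', hl', -⟩ := Option.map_eq_some_iff.mp h
      have htail := ih hl' (fun x hx => hcs x (List.mem_cons_of_mem c hx))
      have hjc : c ≤ j ∧ j < c + (M + 1 - c) :=
        List.mem_range'_1.mp (List.mem_of_find?_eq_some hj)
      have hc₀ := hcs c List.mem_cons_self
      have hsub : Ico j (j + y) ⊆ Ico c₀ (M + 1) \ occ := fun i hi => by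
        have := hfit.1 i hi
        simp only [mem_Ico, mem_sdiff] at hi ⊢
        exact ⟨⟨by omega, by omega⟩, this⟩
      have hcard := card_le_card hsub
      rw [← sup_eq_union, ← sdiff_sdiff_left, card_sdiff_of_subset hsub, Nat.card_Ico] at htail
      rw [Nat.card_Ico] at hcard
      rw [List.sum_cons]
      omega

lemma parkResult_cons_eq_none_of_lt {y c a : ℕ} {ys cs : List ℕ} (hy : 0 < y) (ha : 1 ≤ a)
    (hac : a < c) (hcs : ∀ x ∈ cs, c ≤ x) :
    parkResult (y :: ys) (c :: cs) a = none := by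
  rw [Option.eq_none_iff_forall_ne_some]
  intro l hl
  have hsum := sum_le_card_of_parkAux_eq_some hl (c₀ := c) (by simpa using hcs)
  have := card_le_card (sdiff_subset : Ico c (a - 1 + (y :: ys).sum + 1) \ Ico 1 a ⊆ _)
  simp only [Nat.card_Ico, List.sum_cons] at hsum this
  omega

theorem parkResult_isSome_iff {ys cs : List ℕ} {a : ℕ} (hys : ∀ y ∈ ys, 0 < y)
    (hpos : ∀ c ∈ cs, 1 ≤ c) (hsorted : cs.Pairwise (· ≤ ·)) (ha : 1 ≤ a) :
    (parkResult ys cs a).isSome ↔ cs.Forall₂ (· ≤ ·) (standardStarts a ys) := by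
  induction cs generalizing ys a with
  | nil => cases ys <;> simp [parkResult, parkAux, standardStarts]
  | cons c cs ih =>
    cases ys with
    | nil => simp [parkResult, parkAux, standardStarts]
    | cons y ys =>
      rw [List.pairwise_cons] at hsorted
      have hy := hys y List.mem_cons_self
      rw [standardStarts, List.forall₂_cons]
      by_cases hca : c ≤ a
      · rw [parkResult_cons_of_le hy (hpos c List.mem_cons_self) hca, Option.isSome_map,
          ih (fun y hy => hys y (List.mem_cons_of_mem _ hy))
            (fun x hx => hpos x (List.mem_cons_of_mem _ hx)) hsorted.2 (by omega)]
        exact (and_iff_right hca).symm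
      · rw [parkResult_cons_eq_none_of_lt hy ha (by omega) hsorted.1]
        simp [hca]

lemma length_standardStarts (z : ℕ) (ys : List ℕ) :
    (standardStarts z ys).length = ys.length := by
  induction ys generalizing z with
  | nil => rfl
  | cons y ys ih => simp [standardStarts, ih]

theorem isParkingSeq_iff_forall₂ {ys cs : List ℕ} {a : ℕ} (hys : ∀ y ∈ ys, 0 < y)
    (hsorted : cs.Pairwise (· ≤ ·)) (ha : 1 ≤ a) :
    IsParkingSeq ys cs a ↔
      (∀ c ∈ cs, 1 ≤ c) ∧ cs.Forall₂ (· ≤ ·) (standardStarts a ys) := by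
  constructor
  · rintro ⟨-, hpos, hparks⟩
    exact ⟨hpos, (parkResult_isSome_iff hys hpos hsorted ha).mp hparks⟩
  · rintro ⟨hpos, hle⟩
    exact ⟨hle.length_eq.trans (length_standardStarts a ys), hpos,
      (parkResult_isSome_iff hys hpos hsorted ha).mpr hle⟩

lemma standardStarts_add (z m : ℕ) (ys : List ℕ) :
    standardStarts (z + m) ys = (standardStarts z ys).map (· + m) := by
  induction ys generalizing z with
  | nil => rfl
  | cons y ys ih => simp [standardStarts, ← ih, Nat.add_right_comm z m y]

def incParkingSeqs : List ℕ → ℕ → Finset (List ℕ)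
  | [], _ => {[]}
  | _ :: _, 0 => ∅
  | y :: ys, z + 1 =>
    (incParkingSeqs (y :: ys) z).map
        ⟨List.map (· + 1), List.map_injective_iff.mpr (add_left_injective 1)⟩ ∪
      (incParkingSeqs ys (z + 1 + y)).map ⟨List.cons 1, List.cons_injective⟩
termination_by ys z => (ys.length, z)

theorem mem_incParkingSeqs {ys cs : List ℕ} {z : ℕ} :
    cs ∈ incParkingSeqs ys z ↔
      cs.Pairwise (· ≤ ·) ∧ (∀ c ∈ cs, 1 ≤ c) ∧
        cs.Forall₂ (· ≤ ·) (standardStarts z ys) := by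
  induction ys, z using incParkingSeqs.induct generalizing cs with
  | case1 z =>
    rw [incParkingSeqs, standardStarts, mem_singleton, List.forall₂_nil_right_iff]
    constructor
    · rintro rfl
      simp
    · exact fun h => h.2.2
  | case2 y ys =>
    rw [incParkingSeqs, standardStarts]
    simp only [notMem_empty, false_iff, not_and]
    rintro - hpos hle
    obtain _ | ⟨c, cs⟩ := cs
    · simp at hle
    · have := hpos c List.mem_cons_self
      have := (List.forall₂_cons.mp hle).1
      omega
  | case3 y ys z ih₁ ih₂ =>
    simp only [incParkingSeqs, mem_union, mem_map, Function.Embedding.coeFn_mk, ih₁, ih₂,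
      Nat.succ_eq_add_one]
    constructor
    · rintro (⟨d, ⟨hs, hp, hle⟩, rfl⟩ | ⟨d, ⟨hs, hp, hle⟩, rfl⟩)
      · refine ⟨hs.map _ fun _ _ h => by omega, by simp, ?_⟩
        rw [standardStarts_add, List.forall₂_map_left_iff, List.forall₂_map_right_iff]
        exact hle.imp fun _ _ h => by omega
      · exact ⟨List.pairwise_cons.mpr ⟨hp, hs⟩, by simpa using hp,
          List.forall₂_cons.mpr ⟨by omega, hle⟩⟩
    · rintro ⟨hs, hp, hle⟩
      obtain _ | ⟨c, cs⟩ := cs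
      · simp [standardStarts] at hle
      rcases (hp c List.mem_cons_self).eq_or_lt with rfl | hc
      · exact Or.inr ⟨cs, ⟨hs.of_cons, fun x hx => hp x (List.mem_cons_of_mem _ hx),
          (List.forall₂_cons.mp hle).2⟩, rfl⟩
      have hge : ∀ x ∈ c :: cs, 2 ≤ x := by
        simp only [List.mem_cons, forall_eq_or_imp]
        exact ⟨hc, fun x hx => hc.trans_le (List.rel_of_pairwise_cons hs hx)⟩
      refine Or.inl ⟨(c :: cs).map (· - 1), ⟨hs.map _ fun _ _ h => by omega, ?_, ?_⟩, ?_⟩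
      · simp only [List.mem_map]
        rintro _ ⟨x, hx, rfl⟩
        have := hge x hx
        omega
      · rw [standardStarts_add, List.forall₂_map_right_iff] at hle
        rw [List.forall₂_map_left_iff]
        exact hle.imp fun _ _ h => by omega
      · rw [List.map_map]
        refine (List.map_congr_left fun x hx => ?_).trans (List.map_id _)
        have := hge x hx
        simp only [Function.comp_apply, id_eq]
        omega

lemma card_incParkingSeqs_cons_succ (y z : ℕ) (ys : List ℕ) :
    #(incParkingSeqs (y :: ys) (z + 1)) =
      #(incParkingSeqs (y :: ys) z) + #(incParkingSeqs ys (z + 1 + y)) := by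
  rw [incParkingSeqs, card_union_of_disjoint, card_map, card_map]
  simp only [disjoint_left, mem_map, Function.Embedding.coeFn_mk, not_exists, not_and]
  rintro _ ⟨_ | ⟨c, d⟩, hd, rfl⟩ e - he
  · simp at he
  · have := (mem_incParkingSeqs.mp hd).2.1 c List.mem_cons_self
    simp only [List.map_cons, List.cons.injEq] at he
    omega

/-- The Rothe recurrence `R(z + 1, n + 1) = R(z, n + 1) + R(z + 1 + k, n)` with denominators
cleared: `A = R(z, n + 1)` and `B = R(z + 1 + k, n)` share the denominator `M`. -/
lemma rothe_recurrence {A B z k n M : ℕ} (hM : M = z + (n + 1) * (k + 1))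
    (hA : A * M = z * M.choose (n + 1)) (hB : B * M = (z + 1 + k) * M.choose n) :
    (A + B) * (M + 1) = (z + 1) * (M + 1).choose (n + 1) := by
  have hratio := Nat.choose_succ_right_eq M n
  rw [show M - n = z + n * k + k + 1 by rw [hM]; ring_nf; omega] at hratio
  refine Nat.eq_of_mul_eq_mul_right (show 0 < M by rw [hM]; positivity) ?_
  rw [Nat.choose_succ_succ']
  zify at *
  linear_combination (M + 1 : ℤ) * (hA + hB) - (k + 1 : ℤ) * hratio +
    (k * M.choose n - M.choose (n + 1) : ℤ) * hM

theorem card_incParkingSeqs_replicate (n k z : ℕ) :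
    #(incParkingSeqs (List.replicate n k) z) * (z + n * (k + 1)) =
      z * (z + n * (k + 1)).choose n := by
  induction n generalizing z with
  | zero => simp [incParkingSeqs]
  | succ n ihn =>
    induction z with
    | zero => simp [List.replicate_succ, incParkingSeqs]
    | succ z ihz =>
      rw [List.replicate_succ, card_incParkingSeqs_cons_succ]
      have hB := ihn (z + 1 + k)
      rw [show z + 1 + k + n * (k + 1) = z + (n + 1) * (k + 1) by ring] at hB
      rw [show z + 1 + (n + 1) * (k + 1) = z + (n + 1) * (k + 1) + 1 by ring]
      exact rothe_recurrence rfl ihz hB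

theorem stmt3_general (n k z : ℕ) (hk : 0 < k) (hz : 0 < z) :
    {cs : List ℕ | cs.length = n ∧ List.Pairwise (· ≤ ·) cs ∧
        IsParkingSeq (List.replicate n k) cs z}.ncard * (z + n * (k + 1))
      = z * (z + n * (k + 1)).choose n := by
  have hcars : ∀ y ∈ List.replicate n k, 0 < y := fun y hy => List.eq_of_mem_replicate hy ▸ hk
  have hset : {cs : List ℕ | cs.length = n ∧ List.Pairwise (· ≤ ·) cs ∧
      IsParkingSeq (List.replicate n k) cs z} = ↑(incParkingSeqs (List.replicate n k) z) := by
    ext cs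
    rw [Set.mem_ofPred_eq, mem_coe, mem_incParkingSeqs]
    constructor
    · rintro ⟨-, hsorted, hpark⟩
      exact ⟨hsorted, (isParkingSeq_iff_forall₂ hcars hsorted hz).mp hpark⟩
    · rintro ⟨hsorted, hpark⟩
      have hpark' := (isParkingSeq_iff_forall₂ hcars hsorted hz).mpr hpark
      exact ⟨hpark'.1.trans (List.length_replicate ..), hsorted, hpark'⟩
  rw [hset, Set.ncard_coe_finset]
  exact card_incParkingSeqs_replicate n k z

theorem stmt3 (n k z : ℕ) (hn : 0 < n) (hk : 0 < k) (hz : 0 < z) :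
    {cs : List ℕ | cs.length = n ∧ List.Pairwise (· ≤ ·) cs ∧
        IsParkingSeq (List.replicate n k) cs z}.ncard * (z + n * (k + 1))
      = z * (z + n * (k + 1)).choose n :=
  stmt3_general n k z hk hz
end

section
/- Fix a length vector y ∈ (Z_+)^n and z ∈ Z_+. Every sequence c ∈ [z]^n (all preferences at most z) is a permutation-invariant parking sequence for (y;z): every rearrangement of c is a parking sequence for (y;z), and moreover the final parking configuration under c is the trailer followed by C_1,...,C_n in order. -/
open Finset

/-!
Since the trailer fills spots `1, …, z - 1` and every preference is at most `z`, the occupied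
spots always form an initial segment `[1, t)` with `z ≤ t`. Each car therefore takes the first
free spot `t`, whatever its preference, so the cars park bumper to bumper in order of arrival.
This depends only on the preferences being at most `z`, a property shared by every
rearrangement of `c`.
-/

lemma firstEmpty_Ico_one {t M c : ℕ} (hc : 1 ≤ c) (hct : c ≤ t) (htM : t ≤ M) :
    firstEmpty (Ico 1 t) M c = some t := by
  unfold firstEmpty
  rw [show M + 1 - c = (t - c) + (M + 1 - t) by omega, ← List.range'_append_1,
    List.find?_append, show c + (t - c) = t by omega,
    show M + 1 - t = (M - t) + 1 by omega, List.range'_succ, List.find?_cons]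
  have hoccupied : (List.range' c (t - c)).find? (fun j => decide (j ∉ Ico 1 t)) = none := by
    rw [List.find?_eq_none]
    intro j hj
    rw [List.mem_range'_1] at hj
    simp only [mem_Ico, decide_eq_true_eq, not_not]
    omega
  rw [hoccupied]
  simp

lemma parkAux_Ico_one (ys : List ℕ) {cs : List ℕ} {t M : ℕ} (hlen : cs.length = ys.length)
    (hcs : ∀ c ∈ cs, 1 ≤ c ∧ c ≤ t) (hys : ∀ y ∈ ys, 0 < y) (hM : t - 1 + ys.sum ≤ M) :
    parkAux M (Ico 1 t) cs ys = some (standardStarts t ys) := by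
  induction ys generalizing cs t with
  | nil =>
    rw [List.length_eq_zero_iff.mp hlen]
    rfl
  | cons y ys ih =>
    obtain _ | ⟨c, cs⟩ := cs
    · simp at hlen
    obtain ⟨hc1, hct⟩ := hcs c List.mem_cons_self
    have hy := hys y List.mem_cons_self
    rw [List.sum_cons] at hM
    have hfits : (∀ i ∈ Ico t (t + y), i ∉ Ico 1 t) ∧ t + y - 1 ≤ M := by
      refine ⟨fun i hi => ?_, by omega⟩
      simp only [mem_Ico] at hi ⊢
      omega
    rw [parkAux, firstEmpty_Ico_one hc1 hct (by omega)]
    dsimp only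
    rw [if_pos hfits, Ico_union_Ico_eq_Ico (by omega) (by omega),
      ih (by simpa using hlen)
        (fun x hx => (hcs x (List.mem_cons_of_mem c hx)).imp_right (by omega))
        (fun x hx => hys x (List.mem_cons_of_mem y hx)) (by omega)]
    rfl

lemma parkResult_eq_standardStarts {ys cs : List ℕ} {z : ℕ} (hlen : cs.length = ys.length)
    (hcs : ∀ c ∈ cs, 1 ≤ c ∧ c ≤ z) (hys : ∀ y ∈ ys, 0 < y) :
    parkResult ys cs z = some (standardStarts z ys) :=
  parkAux_Ico_one ys hlen hcs hys le_rfl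

theorem stmt6_general (n z : ℕ) (ys cs : List ℕ)
    (hylen : ys.length = n) (hypos : ∀ y ∈ ys, 0 < y)
    (hclen : cs.length = n) (hc : ∀ c ∈ cs, 1 ≤ c ∧ c ≤ z) :
    PermInvariant ys cs z ∧ ParksStandard ys cs z := by
  refine ⟨fun cs' hperm => ?_, parkResult_eq_standardStarts (by omega) hc hypos⟩
  have hlen' : cs'.length = ys.length := by rw [hperm.length_eq]; omega
  have hc' : ∀ c ∈ cs', 1 ≤ c ∧ c ≤ z := fun c h => hc c (hperm.subset h)
  refine ⟨hlen', fun c h => (hc' c h).1, ?_⟩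
  rw [parkResult_eq_standardStarts hlen' hc' hypos]
  rfl

theorem stmt6 (n z : ℕ) (hz : 0 < z) (ys cs : List ℕ)
    (hylen : ys.length = n) (hypos : ∀ y ∈ ys, 0 < y)
    (hclen : cs.length = n) (hc : ∀ c ∈ cs, 1 ≤ c ∧ c ≤ z) :
    PermInvariant ys cs z ∧ ParksStandard ys cs z :=
  stmt6_general n z ys cs hylen hypos hclen hc
end
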